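/- Let D = diag(ε, ε, εω) with ε = e^{4πi/9}. Then X = DVD⁻¹, D⁻¹CD = C, D⁻¹ED = CE, and D³ = ω²·𝟙. In particular D normalizes Δ(27) = ⟨C,E⟩. -/

import Mathlib

open Matrix

noncomputable def ω : ℂ := Complex.exp (2 * Real.pi * Complex.I / 3)

noncomputable def Cmat : Matrix (Fin 3) (Fin 3) ℂ := !![1,0,0; 0,ω,0; 0,0,ω^2]

noncomputable def Emat : Matrix (Fin 3) (Fin 3) ℂ := !![0,1,0; 0,0,1; 1,0,0]

noncomputable def Vmat : Matrix (Fin 3) (Fin 3) ℂ :=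
  (1 / ((Real.sqrt 3 : ℂ) * Complex.I)) • !![1,1,1; 1,ω,ω^2; 1,ω^2,ω]

noncomputable def Xmat : Matrix (Fin 3) (Fin 3) ℂ :=
  (1 / ((Real.sqrt 3 : ℂ) * Complex.I)) • !![1,1,ω^2; 1,ω,ω; ω,1,ω]

noncomputable def ε : ℂ := Complex.exp (4 * Real.pi * Complex.I / 9)

noncomputable def Dmat : Matrix (Fin 3) (Fin 3) ℂ := !![ε,0,0; 0,ε,0; 0,0,ε*ω]

/-! All four identities are entrywise computations with `ω ^ 3 = 1` and `ε ^ 3 = ω ^ 2`.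
Since `D` commutes with `C` and conjugates `E` to `C⁻¹ E`, and `D⁻¹` conjugates `E` to `C E`,
conjugation by `D` maps the generators of `⟨C, E⟩` into `⟨C, E⟩` in both directions. -/

theorem ω_pow_three : ω ^ 3 = 1 := by
  rw [ω, ← Complex.exp_nat_mul]
  convert Complex.exp_two_pi_mul_I using 2
  push_cast
  ring

theorem ε_pow_three : ε ^ 3 = ω ^ 2 := by
  rw [ε, ω, ← Complex.exp_nat_mul, ← Complex.exp_nat_mul]
  congr 1
  push_cast
  ring

theorem Xmat_mul_Dmat : Xmat * Dmat = Dmat * Vmat := by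
  ext i j
  fin_cases i <;> fin_cases j <;> simp [Xmat, Dmat, Vmat, mul_apply, Fin.sum_univ_succ] <;>
    grind [ω_pow_three]

theorem Cmat_commute_Dmat : Commute Cmat Dmat := by
  ext i j
  fin_cases i <;> fin_cases j <;> simp [Cmat, Dmat, mul_apply, Fin.sum_univ_succ] <;> ring

theorem Emat_mul_Dmat : Emat * Dmat = Dmat * (Cmat * Emat) := by
  ext i j
  fin_cases i <;> fin_cases j <;> simp [Emat, Cmat, Dmat, mul_apply, Fin.sum_univ_succ]
  grind [ω_pow_three]

theorem Dmat_pow_three : Dmat ^ 3 = ω ^ 2 • (1 : Matrix (Fin 3) (Fin 3) ℂ) := by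
  rw [pow_three]
  ext i j
  fin_cases i <;> fin_cases j <;> simp [Dmat, mul_apply, Fin.sum_univ_succ] <;>
    grind [ω_pow_three, ε_pow_three]

theorem isUnit_det_Dmat : IsUnit Dmat.det := by
  have hε : ε ≠ 0 := Complex.exp_ne_zero _
  have hω : ω ≠ 0 := Complex.exp_ne_zero _
  simp [Dmat, det_fin_three, hε, hω]

noncomputable instance : Invertible Dmat := invertibleOfIsUnitDet _ isUnit_det_Dmat

theorem Subgroup.mem_normalizer_closure_of_conj {G : Type*} [Group G] {s : Set G} {g : G}
    (h₁ : ∀ x ∈ s, g * x * g⁻¹ ∈ Subgroup.closure s)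
    (h₂ : ∀ x ∈ s, g⁻¹ * x * g ∈ Subgroup.closure s) :
    g ∈ Subgroup.normalizer (Subgroup.closure s : Set G) := by
  rw [Subgroup.mem_normalizer_iff_map_conj_eq, MonoidHom.map_closure]
  refine le_antisymm (Subgroup.closure_le _ |>.2 ?_) ?_
  · rintro _ ⟨x, hx, rfl⟩
    exact h₁ x hx
  · rw [Subgroup.closure_le, ← MonoidHom.map_closure]
    exact fun x hx ↦ ⟨_, h₂ x hx, by simp [mul_assoc]⟩

theorem Subgroup.mem_normalizer_closure_pair {G : Type*} [Group G] {c e d : G}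
    (hcd : Commute c d) (hed : e * d = d * (c * e)) :
    d ∈ Subgroup.normalizer (Subgroup.closure {c, e} : Set G) := by
  have hc : c ∈ Subgroup.closure {c, e} := Subgroup.subset_closure (by simp)
  have he : e ∈ Subgroup.closure {c, e} := Subgroup.subset_closure (by simp)
  apply Subgroup.mem_normalizer_closure_of_conj
  · rintro x (rfl | rfl)
    · rwa [hcd.symm.mul_inv_cancel]
    · have hconj : d * x * d⁻¹ = c⁻¹ * x := by
        rw [mul_inv_eq_iff_eq_mul, mul_assoc, hed, ← mul_assoc, hcd.inv_left.eq, mul_assoc,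
          inv_mul_cancel_left]
      rw [hconj]
      exact mul_mem (inv_mem hc) he
  · rintro x (rfl | rfl)
    · rwa [hcd.symm.inv_mul_cancel]
    · rw [mul_assoc, hed, inv_mul_cancel_left]
      exact mul_mem hc he

/-- X = DVD⁻¹, D⁻¹CD = C, D⁻¹ED = CE, D³ = ω²𝟙; D normalizes Δ(27) = ⟨C,E⟩. -/
theorem stmt_17 :
    Xmat = Dmat * Vmat * Dmat⁻¹ ∧
    Dmat⁻¹ * Cmat * Dmat = Cmat ∧
    Dmat⁻¹ * Emat * Dmat = Cmat * Emat ∧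
    Dmat ^ 3 = ω ^ 2 • (1 : Matrix (Fin 3) (Fin 3) ℂ) ∧
    ∀ c e d : GL (Fin 3) ℂ, (c : Matrix (Fin 3) (Fin 3) ℂ) = Cmat →
      (e : Matrix (Fin 3) (Fin 3) ℂ) = Emat →
      (d : Matrix (Fin 3) (Fin 3) ℂ) = Dmat →
      d ∈ Subgroup.normalizer (↑(Subgroup.closure {c, e}) : Set (GL (Fin 3) ℂ)) := by
  refine ⟨?_, ?_, ?_, Dmat_pow_three, ?_⟩
  · exact ((mul_inv_eq_iff_eq_mul_of_invertible _ _ _).2 Xmat_mul_Dmat.symm).symm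
  · rw [mul_assoc, inv_mul_eq_iff_eq_mul_of_invertible]
    exact Cmat_commute_Dmat.eq
  · rw [mul_assoc, inv_mul_eq_iff_eq_mul_of_invertible]
    exact Emat_mul_Dmat
  · intro c e d hc he hd
    apply Subgroup.mem_normalizer_closure_pair
    · exact Units.ext (by simpa only [Units.val_mul, hc, hd] using Cmat_commute_Dmat.eq)
    · exact Units.ext (by simpa only [Units.val_mul, hc, he, hd] using Emat_mul_Dmat)
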